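/- Define FL : ℝ¹² → ℝ¹⁰ by FL(x, y, u, u₁, u₂, u₂₀, u₁₁, u₀₂, u₃₀, u₂₁, u₁₂, u₀₃) := (x, y, u, u₁, u₂, −u₃₀ − u₁₂, −u₂₁ − u₀₃, u₂₀, 2u₁₁, u₀₂) (the restricted Legendre map of the clamped-plate Lagrangian L = ½(u₂₀² + 2u₁₁² + u₀₂² − 2qu)), and define Υ : ℝ¹⁰ → ℝ¹² by Υ(x, y, u, u₁, u₂, p¹, p², p²⁰, p¹¹, p⁰²) := (x, y, u, u₁, u₂, p²⁰, ½p¹¹, p⁰², −½p¹, −½p², −½p¹, −½p²). Then FL ∘ Υ = id on ℝ¹⁰; in particular FL is surjective and the total derivative of FL at every point of ℝ¹² has rank 10 (the clamped-plate Lagrangian is hyperregular). -/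

import Mathlib

/-!
`FLplate` is linear, so its derivative at every point is `FLplate` itself, and `Υ` is a
right inverse of it; hence that derivative is onto `ℝ¹⁰`.
-/

noncomputable section

/-- The restricted Legendre map of the clamped-plate Lagrangian
`L = ½(u₂₀² + 2u₁₁² + u₀₂² − 2qu)`, in coordinates
`(x, y, u, u₁, u₂, u₂₀, u₁₁, u₀₂, u₃₀, u₂₁, u₁₂, u₀₃) ↦
 (x, y, u, u₁, u₂, p¹, p², p²⁰, p¹¹, p⁰²)`. -/
def FLplate : (Fin 12 → ℝ) → (Fin 10 → ℝ) := fun v =>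
  ![v 0, v 1, v 2, v 3, v 4, -v 8 - v 10, -v 9 - v 11, v 5, 2 * v 6, v 7]

/-- The global section `Υ` of `FLplate`. -/
def Upsilon : (Fin 10 → ℝ) → (Fin 12 → ℝ) := fun w =>
  ![w 0, w 1, w 2, w 3, w 4, w 7, (1 / 2) * w 8, w 9,
    -(1 / 2) * w 5, -(1 / 2) * w 6, -(1 / 2) * w 5, -(1 / 2) * w 6]

theorem ContinuousLinearMap.finrank_range_fderiv_of_surjective {𝕜 E F : Type*}
    [NontriviallyNormedField 𝕜] [NormedAddCommGroup E] [NormedSpace 𝕜 E]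
    [NormedAddCommGroup F] [NormedSpace 𝕜 F] (L : E →L[𝕜] F) (hL : Function.Surjective L)
    (a : E) :
    Module.finrank 𝕜 (LinearMap.range ((fderiv 𝕜 L a : E →L[𝕜] F) : E →ₗ[𝕜] F)) =
      Module.finrank 𝕜 F := by
  rw [L.fderiv, LinearMap.range_eq_top.2 hL, finrank_top]

theorem isLinearMap_FLplate : IsLinearMap ℝ FLplate := by
  constructor <;> intros <;> ext i <;> fin_cases i <;> simp [FLplate] <;> ring

def FLplateCLM : (Fin 12 → ℝ) →L[ℝ] (Fin 10 → ℝ) :=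
  LinearMap.toContinuousLinearMap (IsLinearMap.mk' FLplate isLinearMap_FLplate)

theorem coe_FLplateCLM : ⇑FLplateCLM = FLplate := rfl

theorem FLplate_comp_Upsilon : FLplate ∘ Upsilon = id := by
  ext w i
  fin_cases i <;> simp [FLplate, Upsilon] <;> ring

theorem surjective_FLplate : Function.Surjective FLplate :=
  Function.RightInverse.surjective (Function.leftInverse_iff_comp.2 FLplate_comp_Upsilon)

/-- `FL ∘ Υ = id`; in particular `FL` is surjective and its Fréchet
derivative has rank 10 everywhere (the clamped-plate Lagrangian is hyperregular). -/
theorem statement12 :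
    (FLplate ∘ Upsilon = id) ∧
    Function.Surjective FLplate ∧
    (∀ a : Fin 12 → ℝ,
      Module.finrank ℝ ↥(LinearMap.range ((fderiv ℝ FLplate a : (Fin 12 → ℝ) →L[ℝ] (Fin 10 → ℝ)) : (Fin 12 → ℝ) →ₗ[ℝ] (Fin 10 → ℝ))) = 10) := by
  refine ⟨FLplate_comp_Upsilon, surjective_FLplate, fun a => ?_⟩
  rw [← coe_FLplateCLM, FLplateCLM.finrank_range_fderiv_of_surjective surjective_FLplate,
    Module.finrank_fin_fun]
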